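/- arXiv:2207.12528 — 4 statements merged into one kernel-verified Lean document; each statement's English description precedes it below -/
import Mathlib

section
/- Let m ≥ 3, let G be an m-edge-coloured graph, let xy be an edge of colour i, and let j ≠ i. Choose a transposition α = (i j) and, picking any k ∉ {i,j}, β = (j k). Then applying the switching sequence (x,α),(y,β),(x,α),(y,β) to G yields an m-edge-coloured graph G' with the same underlying graph in which xy has colour j and every edge other than xy has the same colour as in G. -/
/-- Switching at vertex `x` with respect to a permutation `π` of colours: the colour
of each edge incident to `x` is replaced by its image under `π`. -/
def switchAt {V C : Type} [DecidableEq V] (σ : Sym2 V → C) (x : V)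
    (π : Equiv.Perm C) : Sym2 V → C :=
  fun e => if x ∈ e then π (σ e) else σ e

/-- Apply a switching sequence (list of (vertex, permutation) pairs, left to right). -/
def switchSeq {V C : Type} [DecidableEq V] (σ : Sym2 V → C)
    (S : List (V × Equiv.Perm C)) : Sym2 V → C :=
  S.foldl (fun τ p => switchAt τ p.1 p.2) σ

/-- m ≥ 3, xy an edge of colour i, j ≠ i, k ∉ {i,j}, α = (i j),
β = (j k). Applying (x,α),(y,β),(x,α),(y,β) gives xy colour j and leaves every
other edge with its colour in G. -/
theorem stmt11 {V : Type} [DecidableEq V] (m : ℕ) (hm : 3 ≤ m) (i j k : Fin m)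
    (hji : j ≠ i) (hki : k ≠ i) (hkj : k ≠ j)
    (G : SimpleGraph V) (x y : V) (hadj : G.Adj x y)
    (σ : Sym2 V → Fin m) (hcol : σ s(x, y) = i) :
    switchSeq σ [(x, Equiv.swap i j), (y, Equiv.swap j k),
        (x, Equiv.swap i j), (y, Equiv.swap j k)] s(x, y) = j ∧
    ∀ e ∈ G.edgeSet, e ≠ s(x, y) →
      switchSeq σ [(x, Equiv.swap i j), (y, Equiv.swap j k),
        (x, Equiv.swap i j), (y, Equiv.swap j k)] e = σ e := by
  constructor
  · simp only [switchSeq, List.foldl, switchAt, Sym2.mem_iff, true_or, or_true, if_true, if_pos]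
    rw [hcol, Equiv.swap_apply_left, Equiv.swap_apply_left,
      Equiv.swap_apply_of_ne_of_ne hki hkj, Equiv.swap_apply_right]
  · intro e he hne
    have hxy : x ≠ y := hadj.ne
    simp only [switchSeq, List.foldl, switchAt]
    by_cases hx : x ∈ e <;> by_cases hy : y ∈ e <;> simp [hx, hy]
    · exfalso
      exact hne ((Sym2.mem_and_mem_iff hxy).mp ⟨hx, hy⟩)
end

section
/- Let m ≥ 3 and fix j ∈ {1,...,m}. For every m-edge-coloured graph G there exists an S_m-switching sequence S such that every edge of G^S has colour j (G^S is monochromatic of colour j). -/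
lemma gadget_eval {V C : Type} [DecidableEq V] (σ : Sym2 V → C) (u v : V)
    (huv : u ≠ v) (π ρ : Equiv.Perm C) (e : Sym2 V) :
    switchSeq σ [(u, π), (v, ρ), (u, π⁻¹), (v, ρ⁻¹)] e =
      if e = s(u, v) then ρ⁻¹ (π⁻¹ (ρ (π (σ e)))) else σ e := by
  simp only [switchSeq, List.foldl, switchAt]
  by_cases hu : u ∈ e <;> by_cases hv : v ∈ e
  · have he : e = s(u, v) := ((Sym2.mem_and_mem_iff huv).mp ⟨hu, hv⟩)
    simp [hu, hv, he]
  · have he : e ≠ s(u, v) := fun h => hv (h ▸ Sym2.mem_mk_right u v)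
    simp [hu, hv, he]
  · have he : e ≠ s(u, v) := fun h => hu (h ▸ Sym2.mem_mk_left u v)
    simp [hu, hv, he]
  · have he : e ≠ s(u, v) := fun h => hu (h ▸ Sym2.mem_mk_left u v)
    simp [hu, hv, he]

lemma fix_one (m : ℕ) (hm : 3 ≤ m) (j c : Fin m) :
    ∃ π ρ : Equiv.Perm (Fin m), ρ⁻¹ (π⁻¹ (ρ (π c))) = j := by
  by_cases hcj : c = j
  · exact ⟨1, 1, by simp [hcj]⟩
  · have hne : (({c, j}ᶜ : Finset (Fin m))).Nonempty := by
      rw [← Finset.card_pos, Finset.card_compl]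
      have h2 : ({c, j} : Finset (Fin m)).card ≤ 2 :=
        (Finset.card_insert_le _ _).trans (by simp)
      have : (2 : ℕ) < Fintype.card (Fin m) := by simp; omega
      omega
    obtain ⟨k, hk⟩ := hne
    simp only [Finset.mem_compl, Finset.mem_insert, Finset.mem_singleton, not_or] at hk
    obtain ⟨hkc, hkj⟩ := hk
    refine ⟨Equiv.swap c k, Equiv.swap c j, ?_⟩
    simp only [Equiv.swap_inv]
    rw [Equiv.swap_apply_left, Equiv.swap_apply_of_ne_of_ne hkc hkj,
      Equiv.swap_apply_right, Equiv.swap_apply_left]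

lemma list_fix {V : Type} [DecidableEq V] (m : ℕ) (hm : 3 ≤ m) (j : Fin m) :
    ∀ (E : List (Sym2 V)) (σ : Sym2 V → Fin m), (∀ e ∈ E, ¬ e.IsDiag) →
      ∃ S : List (V × Equiv.Perm (Fin m)),
        (∀ e ∈ E, switchSeq σ S e = j) ∧ (∀ e ∉ E, switchSeq σ S e = σ e) := by
  intro E
  induction E with
  | nil => exact fun σ _ => ⟨[], by simp [switchSeq], by simp [switchSeq]⟩
  | cons a E ih =>
    intro σ hd
    obtain ⟨u, v⟩ := a
    have huv : u ≠ v := by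
      have := hd s(u, v) (by simp)
      simpa [Sym2.mk_isDiag_iff] using this
    obtain ⟨π, ρ, hπρ⟩ := fix_one m hm j (σ s(u, v))
    set g : List (V × Equiv.Perm (Fin m)) := [(u, π), (v, ρ), (u, π⁻¹), (v, ρ⁻¹)] with hg
    set σ' := switchSeq σ g with hσ'
    have hσ'a : σ' s(u, v) = j := by
      rw [hσ', gadget_eval σ u v huv, if_pos rfl, hπρ]
    have hσ'e : ∀ e, e ≠ s(u, v) → σ' e = σ e := by
      intro e he
      rw [hσ', gadget_eval σ u v huv, if_neg he]
    obtain ⟨S', hS1, hS2⟩ := ih σ' (fun e he => hd e (by simp [he]))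
    refine ⟨g ++ S', ?_, ?_⟩
    · intro e he
      have hfold : switchSeq σ (g ++ S') e = switchSeq σ' S' e := by
        simp [switchSeq, hσ', List.foldl_append]
      rw [hfold]
      rcases List.mem_cons.mp he with h | h
      · by_cases hmem : e ∈ E
        · exact hS1 e hmem
        · rw [hS2 e hmem, h, hσ'a]
      · exact hS1 e h
    · intro e he
      have hfold : switchSeq σ (g ++ S') e = switchSeq σ' S' e := by
        simp [switchSeq, hσ', List.foldl_append]
      have h1 : e ∉ E := fun h => he (by simp [h])
      have h2 : e ≠ s(u, v) := fun h => he (by simp [h])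
      rw [hfold, hS2 e h1, hσ'e e h2]

/-- for m ≥ 3 and any fixed colour j, every (finite) m-edge-coloured
graph admits an S_m-switching sequence after which every edge has colour j. -/
theorem stmt12 {V : Type} [Fintype V] [DecidableEq V] (m : ℕ) (hm : 3 ≤ m)
    (j : Fin m) (G : SimpleGraph V) (σ : Sym2 V → Fin m) :
    ∃ S : List (V × Equiv.Perm (Fin m)),
      ∀ e ∈ G.edgeSet, switchSeq σ S e = j := by
  classical
  set E : List (Sym2 V) := (Finset.univ.filter (· ∈ G.edgeSet)).toList with hE
  have hmem : ∀ e, e ∈ G.edgeSet → e ∈ E := by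
    intro e he
    simp [hE, Finset.mem_toList, he]
  have hd : ∀ e ∈ E, ¬ e.IsDiag := by
    intro e he
    have : e ∈ G.edgeSet := by
      simpa [hE, Finset.mem_toList] using he
    exact G.not_isDiag_of_mem_edgeSet this
  obtain ⟨S, hS1, _⟩ := list_fix m hm j E σ hd
  exact ⟨S, fun e he => hS1 e (hmem e he)⟩
end

section
/- Let m ≥ 2 be even and let G, H be m-edge-coloured graphs on the same vertex and edge sets, with colours in Z/mZ. Define the 2-edge-coloured graphs G₂, H₂ by giving each edge colour 1 if its colour in G (resp. H) is odd and colour 2 if even. If G and H are D_m-switch equivalent then G₂ and H₂ are S₂-switch equivalent. -/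
/-- Apply a Γ-switching sequence for a subgroup Γ of permutations of the colours. -/
def switchSeqSub {V C : Type} [DecidableEq V] {Γ : Subgroup (Equiv.Perm C)}
    (σ : Sym2 V → C) (S : List (V × Γ)) : Sym2 V → C :=
  S.foldl (fun τ p => switchAt τ p.1 (p.2 : Equiv.Perm C)) σ

/-- The dihedral group of symmetries of the regular m-gon, acting on Z/mZ:
the subgroup of permutations of Z/mZ generated by x ↦ x + 1 and x ↦ -x. -/
def dihedral (m : ℕ) : Subgroup (Equiv.Perm (ZMod m)) :=
  Subgroup.closure {Equiv.addLeft (1 : ZMod m), Equiv.neg (ZMod m)}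

/-- The associated 2-edge-coloured graph: an edge gets colour 1 (here `0 : Fin 2`)
if its colour in G is odd and colour 2 (here `1 : Fin 2`) if it is even. -/
def par {V : Type} (m : ℕ) (σ : Sym2 V → ZMod m) : Sym2 V → Fin 2 :=
  fun e => if Even (σ e).val then 1 else 0

/-- Every element of the dihedral group is "affine mod 2". -/
lemma dihedral_affine (m : ℕ) (h2 : 2 ∣ m) {γ : Equiv.Perm (ZMod m)}
    (hγ : γ ∈ dihedral m) :
    ∃ c : ZMod 2, ∀ x : ZMod m,
      ZMod.castHom h2 (ZMod 2) (γ x) = ZMod.castHom h2 (ZMod 2) x + c := by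
  set φ := ZMod.castHom h2 (ZMod 2) with hφ
  have hneg : ∀ a : ZMod 2, -a = a := by decide
  induction hγ using Subgroup.closure_induction with
  | mem g hg =>
    rcases hg with hg | hg
    · exact ⟨1, fun x => by subst hg; simp [add_comm]⟩
    · exact ⟨0, fun x => by subst hg; simp [hneg]⟩
  | one => exact ⟨0, fun x => by simp⟩
  | mul g g' _ _ ihg ihg' =>
    obtain ⟨c, hc⟩ := ihg
    obtain ⟨c', hc'⟩ := ihg'
    exact ⟨c' + c, fun x => by
      simp only [Equiv.Perm.mul_apply, hc, hc', add_assoc]⟩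
  | inv g _ ih =>
    obtain ⟨c, hc⟩ := ih
    refine ⟨-c, fun x => ?_⟩
    have := hc (g⁻¹ x)
    rw [show g (g⁻¹ x) = x from Equiv.apply_symm_apply g x] at this
    rw [this]; ring

/-- The induced permutation of `Fin 2`. -/
def perm2 (m : ℕ) (γ : Equiv.Perm (ZMod m)) : Equiv.Perm (Fin 2) :=
  if Even ((γ (0 : ZMod m)).val) then 1 else Equiv.swap 0 1

lemma even_val_iff (m : ℕ) (hm : 0 < m) (h2 : 2 ∣ m) (x : ZMod m) :
    Even x.val ↔ ZMod.castHom h2 (ZMod 2) x = 0 := by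
  haveI : NeZero m := ⟨hm.ne'⟩
  rw [ZMod.castHom_apply, ← ZMod.natCast_val]
  rw [ZMod.natCast_eq_zero_iff]
  exact even_iff_two_dvd

lemma par_switchAt {V : Type} [DecidableEq V] (m : ℕ) (hm : 0 < m) (h2 : 2 ∣ m)
    (σ : Sym2 V → ZMod m) (v : V) {γ : Equiv.Perm (ZMod m)} (hγ : γ ∈ dihedral m) :
    par m (switchAt σ v γ) = switchAt (par m σ) v (perm2 m γ) := by
  obtain ⟨c, hc⟩ := dihedral_affine m h2 hγ
  funext e
  simp only [par, switchAt]
  by_cases hv : v ∈ e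
  · simp only [hv, if_true]
    have key : ∀ x : ZMod m, Even (γ x).val ↔ (Even x.val ↔ Even ((γ 0).val)) := by
      intro x
      have h0 := hc 0
      simp only [map_zero, zero_add] at h0
      rw [even_val_iff m hm h2, even_val_iff m hm h2, even_val_iff m hm h2, hc x, h0]
      rcases (by decide : ∀ a : ZMod 2, a = 0 ∨ a = 1) c with rfl | rfl <;>
        rcases (by decide : ∀ a : ZMod 2, a = 0 ∨ a = 1)
          (ZMod.castHom h2 (ZMod 2) x) with hx | hx <;> rw [hx] <;> decide
    simp only [key (σ e)]
    unfold perm2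
    by_cases h0 : Even ((γ (0 : ZMod m)).val) <;>
      by_cases hσ : Even ((σ e).val) <;> simp [h0, hσ]
  · simp [hv]

theorem par_switchSeqSub {V : Type} [DecidableEq V] (m : ℕ) (hm : 0 < m) (h2 : 2 ∣ m)
    (σ : Sym2 V → ZMod m) (S : List (V × ↥(dihedral m))) :
    par m (switchSeqSub σ S) =
      switchSeq (par m σ) (S.map (fun p => (p.1, perm2 m (p.2 : Equiv.Perm (ZMod m))))) := by
  induction S generalizing σ with
  | nil => rfl
  | cons p S ih =>
    simp only [switchSeqSub, switchSeq, List.foldl_cons, List.map_cons]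
    rw [← switchSeqSub, ← switchSeq, ih, par_switchAt m hm h2 σ p.1 p.2.2]

/-- for even m ≥ 2 and m-edge-coloured graphs G, H on the same vertex
and edge sets, if G and H are D_m-switch equivalent then the associated 2-edge-coloured
graphs G₂ and H₂ are S₂-switch equivalent. -/
theorem stmt15 {V : Type} [DecidableEq V] (m : ℕ) (hm : 2 ≤ m) (heven : Even m)
    (G : SimpleGraph V) (σG σH : Sym2 V → ZMod m)
    (h : ∃ S : List (V × ↥(dihedral m)),
      ∀ e ∈ G.edgeSet, switchSeqSub σG S e = σH e) :
    ∃ T : List (V × Equiv.Perm (Fin 2)),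
      ∀ e ∈ G.edgeSet, switchSeq (par m σG) T e = par m σH e := by
  obtain ⟨S, hS⟩ := h
  have h2 : 2 ∣ m := heven.two_dvd
  refine ⟨S.map (fun p => (p.1, perm2 m (p.2 : Equiv.Perm (ZMod m)))), fun e he => ?_⟩
  rw [← par_switchSeqSub m (by omega) h2 σG S]
  simp only [par, hS e he]
end

section
/- Let m ≥ 4 be even and let G, H be m-edge-coloured graphs on the same underlying graph with colours in Z/mZ, and let G₂, H₂ be the associated 2-edge-coloured graphs (edge coloured by the parity of its colour). If G₂ and H₂ are S₂-switch equivalent then G and H are D_m-switch equivalent. -/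
namespace Stmt16Aux

lemma even_mod (m : ℕ) (hm : 2 ∣ m) (a : ℕ) : Even (a % m) ↔ Even a := by
  rw [Nat.even_iff, Nat.even_iff, Nat.mod_mod_of_dvd a hm]

lemma even_val_add (m : ℕ) [NeZero m] (hm : 2 ∣ m) (x y : ZMod m) :
    Even ((x + y).val) ↔ (Even x.val ↔ Even y.val) := by
  rw [ZMod.val_add, even_mod m hm, Nat.even_add]

lemma exists_two_mul (m : ℕ) [NeZero m] (d : ZMod m) (hd : Even d.val) :
    ∃ k : ZMod m, d = 2 * k := by
  obtain ⟨j, hj⟩ := hd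
  refine ⟨(j : ℕ), ?_⟩
  have h1 : ((d.val : ℕ) : ZMod m) = d := ZMod.natCast_rightInverse d
  rw [← h1, hj]
  push_cast
  ring

lemma addLeft_one_pow (m : ℕ) (n : ℕ) :
    (Equiv.addLeft (1 : ZMod m)) ^ n = Equiv.addLeft (n : ZMod m) := by
  induction n with
  | zero => ext x; simp
  | succ n ih =>
    ext x
    rw [pow_succ]
    simp [Equiv.Perm.mul_apply, ih]

lemma addLeft_mem (m : ℕ) [NeZero m] (k : ZMod m) : Equiv.addLeft k ∈ dihedral m := by
  have h1 : Equiv.addLeft k = (Equiv.addLeft (1 : ZMod m)) ^ k.val := by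
    rw [addLeft_one_pow]
    congr 1
    exact (ZMod.natCast_rightInverse k).symm
  rw [h1]
  exact pow_mem (Subgroup.subset_closure (Set.mem_insert _ _)) _

lemma neg_mem (m : ℕ) : Equiv.neg (ZMod m) ∈ dihedral m :=
  Subgroup.subset_closure (Set.mem_insert_of_mem _ rfl)

def rotEl (m : ℕ) [NeZero m] (k : ZMod m) : (dihedral m) := ⟨Equiv.addLeft k, addLeft_mem m k⟩
def negEl (m : ℕ) : (dihedral m) := ⟨Equiv.neg (ZMod m), neg_mem m⟩

def gadget {V : Type} (m : ℕ) [NeZero m] (u v : V) (k : ZMod m) :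
    List (V × (dihedral m)) :=
  [(u, negEl m), (v, rotEl m k), (u, negEl m), (v, rotEl m (-k))]

lemma gadget_eval {V : Type} [DecidableEq V] (m : ℕ) [NeZero m] (u v : V) (huv : u ≠ v)
    (k : ZMod m) (σ : Sym2 V → ZMod m) (f : Sym2 V) :
    switchSeqSub σ (gadget m u v k) f =
      if f = s(u, v) then σ f - 2 * k else σ f := by
  by_cases hu : u ∈ f <;> by_cases hv : v ∈ f
  · have hf : f = s(u, v) := (Sym2.mem_and_mem_iff huv).mp ⟨hu, hv⟩
    simp [switchSeqSub, gadget, switchAt, hu, hv, hf, negEl, rotEl]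
    ring
  · have hf : f ≠ s(u, v) := fun h => hv (h ▸ Sym2.mem_mk_right u v)
    simp [switchSeqSub, gadget, switchAt, hu, hv, hf, negEl, rotEl]
  · have hf : f ≠ s(u, v) := fun h => hu (h ▸ Sym2.mem_mk_left u v)
    simp [switchSeqSub, gadget, switchAt, hu, hv, hf, negEl, rotEl]
  · have hf : f ≠ s(u, v) := fun h => hu (h ▸ Sym2.mem_mk_left u v)
    simp [switchSeqSub, gadget, switchAt, hu, hv, hf]

lemma even_two_mul_val (m : ℕ) [NeZero m] (hm : 2 ∣ m) (k : ZMod m) :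
    Even ((2 * k).val) := by
  rw [two_mul, even_val_add m hm]

lemma phaseB {V : Type} [DecidableEq V] (m : ℕ) [NeZero m] (hm : 2 ∣ m)
    (σ0 σH : Sym2 V → ZMod m) (L : List (Sym2 V))
    (hL : ∀ e ∈ L, ¬ e.IsDiag ∧ (Even (σ0 e).val ↔ Even (σH e).val)) :
    ∃ S : List (V × (dihedral m)),
      (∀ e ∈ L, switchSeqSub σ0 S e = σH e) ∧
      (∀ f, Even ((switchSeqSub σ0 S f - σ0 f).val)) := by
  induction L with
  | nil =>
    refine ⟨[], by simp, fun f => ?_⟩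
    show Even ((σ0 f - σ0 f).val)
    simp
  | cons e L ih =>
    obtain ⟨S, hS1, hS2⟩ := ih (fun f hf => hL f (List.mem_cons_of_mem _ hf))
    obtain ⟨hdiag, hpar⟩ := hL e List.mem_cons_self
    obtain ⟨u, v, rfl⟩ : ∃ a b, e = s(a, b) :=
      Sym2.ind (f := fun z => ∃ a b, z = s(a, b)) (fun a b => ⟨a, b, rfl⟩) e
    have huv : u ≠ v := by
      intro h
      exact hdiag (by simp [h])
    set σS := switchSeqSub σ0 S with hσS
    have hd1 : Even ((σS s(u,v) - σ0 s(u,v)).val) := hS2 _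
    have hd2 : Even ((σH s(u,v) - σ0 s(u,v)).val) := by
      have h := even_val_add m hm (σ0 s(u,v)) (σH s(u,v) - σ0 s(u,v))
      rw [show σ0 s(u,v) + (σH s(u,v) - σ0 s(u,v)) = σH s(u,v) from by ring] at h
      tauto
    have hd3 : Even ((σH s(u,v) - σS s(u,v)).val) := by
      have h := even_val_add m hm (σH s(u,v) - σS s(u,v)) (σS s(u,v) - σ0 s(u,v))
      rw [show (σH s(u,v) - σS s(u,v)) + (σS s(u,v) - σ0 s(u,v))
            = σH s(u,v) - σ0 s(u,v) from by ring] at h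
      tauto
    obtain ⟨k, hk⟩ := exists_two_mul m _ hd3
    have hval : ∀ f, switchSeqSub σ0 (S ++ gadget m u v (-k)) f =
        if f = s(u, v) then σS f + 2 * k else σS f := by
      intro f
      rw [switchSeqSub, List.foldl_append]
      have hg := gadget_eval m u v huv (-k) σS f
      rw [show σS f - 2 * (-k) = σS f + 2 * k from by ring] at hg
      exact hg
    refine ⟨S ++ gadget m u v (-k), ?_, ?_⟩
    · intro f hf
      rw [hval f]
      by_cases hfe : f = s(u, v)
      · rw [if_pos hfe, hfe]
        linear_combination -hk
      · rw [if_neg hfe]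
        rcases List.mem_cons.mp hf with h | h
        · exact absurd h hfe
        · exact hS1 f h
    · intro f
      rw [hval f]
      by_cases hfe : f = s(u, v)
      · rw [if_pos hfe]
        have h := even_val_add m hm (σS f - σ0 f) (2 * k)
        rw [show σS f - σ0 f + 2 * k = σS f + 2 * k - σ0 f from by ring] at h
        rw [h]
        have h1 := even_two_mul_val m hm k
        have h2 := hS2 f
        tauto
      · rw [if_neg hfe]
        exact hS2 f

def liftP (m : ℕ) [NeZero m] (π : Equiv.Perm (Fin 2)) : (dihedral m) :=
  if π = 1 then 1 else rotEl m 1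

lemma fin2cases : ∀ π : Equiv.Perm (Fin 2), π = 1 ∨ π = Equiv.swap 0 1 := by decide

lemma key (m : ℕ) [NeZero m] (hm1 : 1 < m) (hm : 2 ∣ m) (π : Equiv.Perm (Fin 2))
    (c : ZMod m) :
    (if Even (((liftP m π : Equiv.Perm (ZMod m))) c).val then (1 : Fin 2) else 0)
      = π (if Even c.val then 1 else 0) := by
  rcases fin2cases π with h | h
  · subst h
    simp [liftP]
  · subst h
    have hne : (Equiv.swap (0 : Fin 2) 1) ≠ 1 := by decide
    rw [liftP, if_neg hne]
    have hval : ((Equiv.addLeft (1 : ZMod m)) c).val = (1 + c.val) % m := by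
      have : (Equiv.addLeft (1 : ZMod m)) c = 1 + c := rfl
      haveI hfact : Fact (1 < m) := ⟨hm1⟩
      rw [this, ZMod.val_add, ZMod.val_one _]
    have heq : Even (((rotEl m 1 : (dihedral m)) : Equiv.Perm (ZMod m)) c).val
        ↔ ¬ Even c.val := by
      show Even ((Equiv.addLeft (1 : ZMod m)) c).val ↔ ¬ Even c.val
      rw [hval, even_mod m hm, Nat.even_add]
      simp
    by_cases hc : Even c.val
    · rw [if_pos hc, if_neg (by rw [heq]; exact fun h => h hc)]
      decide
    · rw [if_neg hc, if_pos (heq.mpr hc)]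
      decide

lemma phaseA {V : Type} [DecidableEq V] (m : ℕ) [NeZero m] (hm1 : 1 < m) (hm : 2 ∣ m)
    (σ : Sym2 V → ZMod m) (T : List (V × Equiv.Perm (Fin 2))) :
    ∀ e, par m (switchSeqSub σ (T.map (fun p => (p.1, liftP m p.2)))) e
        = switchSeq (par m σ) T e := by
  induction T generalizing σ with
  | nil => intro e; rfl
  | cons p T ih =>
    intro e
    have step : par m (switchAt σ p.1 ((liftP m p.2 : (dihedral m)) : Equiv.Perm (ZMod m)))
        = switchAt (par m σ) p.1 p.2 := by
      funext f
      by_cases hf : p.1 ∈ f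
      · show (if Even ((switchAt σ p.1 _ f)).val then (1:Fin 2) else 0) = _
        rw [switchAt, switchAt, if_pos hf, if_pos hf]
        exact key m hm1 hm p.2 (σ f)
      · show (if Even ((switchAt σ p.1 _ f)).val then (1:Fin 2) else 0) = _
        rw [switchAt, switchAt, if_neg hf, if_neg hf]
        rfl
    have h := ih (switchAt σ p.1 ((liftP m p.2 : (dihedral m)) : Equiv.Perm (ZMod m))) e
    rw [step] at h
    exact h

end Stmt16Aux

/-- for even m ≥ 4 and m-edge-coloured graphs G, H on the same underlying
graph, if the associated 2-edge-coloured graphs G₂ and H₂ are S₂-switch equivalent then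
G and H are D_m-switch equivalent. -/
theorem stmt16 {V : Type} [Fintype V] [DecidableEq V] (m : ℕ) (hm : 4 ≤ m) (heven : Even m)
    (G : SimpleGraph V) (σG σH : Sym2 V → ZMod m)
    (h : ∃ T : List (V × Equiv.Perm (Fin 2)),
      ∀ e ∈ G.edgeSet, switchSeq (par m σG) T e = par m σH e) :
    ∃ S : List (V × ↥(dihedral m)),
      ∀ e ∈ G.edgeSet, switchSeqSub σG S e = σH e := by
  haveI : NeZero m := ⟨by omega⟩
  have hm1 : 1 < m := by omega
  have hm2 : 2 ∣ m := heven.two_dvd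
  obtain ⟨T, hT⟩ := h
  set T' := T.map (fun p => (p.1, Stmt16Aux.liftP m p.2)) with hT'
  set σ' := switchSeqSub σG T' with hσ'
  have hA : ∀ e, par m σ' e = switchSeq (par m σG) T e :=
    Stmt16Aux.phaseA m hm1 hm2 σG T
  set L := (Set.toFinite G.edgeSet).toFinset.toList with hLdef
  have hLmem : ∀ e ∈ L, e ∈ G.edgeSet := by
    intro e he
    have := Finset.mem_toList.mp he
    exact (Set.Finite.mem_toFinset _).mp this
  have hL : ∀ e ∈ L, ¬ e.IsDiag ∧ (Even (σ' e).val ↔ Even (σH e).val) := by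
    intro e he
    have hem := hLmem e he
    refine ⟨G.not_isDiag_of_mem_edgeSet hem, ?_⟩
    have heq : par m σ' e = par m σH e := by rw [hA e, hT e hem]
    by_cases h1 : Even (σ' e).val <;> by_cases h2 : Even (σH e).val <;>
      simp [par, h1, h2] at heq ⊢
  obtain ⟨S2, hS2, -⟩ := Stmt16Aux.phaseB m hm2 σ' σH L hL
  refine ⟨T' ++ S2, ?_⟩
  intro e he
  rw [switchSeqSub, List.foldl_append]
  exact hS2 e (Finset.mem_toList.mpr ((Set.Finite.mem_toFinset _).mpr he))
end
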